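/- arXiv:2106.01662 — 2 statements merged into one kernel-verified Lean document; each statement's English description precedes it below -/
import Mathlib

section
/- If 𝓗 is a covering family and {f; f_t, t∈T} are proper convex lsc functions, then the biconjugate identity (φ_𝓗)^* = f + δ_E holds, where φ_𝓗(x*) = inf_{H∈𝓗, μ∈ℝ₊^H} (f + ∑_{t∈H} μ_t f_t)^*(x*) and E = ⋂_{t∈T}{f_t ≤ 0}. -/
/-!
Weak duality gives `≤`: at a point `x` of `E` every Lagrangian `f + ∑ μ_t f_t` lies below `f`,
so each of their conjugates, hence also their infimum `φ_𝓗`, dominates `p ↦ p x - f x`.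
For `≥`, conjugation reverses order, so `φ_𝓗^*` dominates every biconjugate
`(f + ∑ μ_t f_t)^**`, which by Fenchel–Moreau is the Lagrangian itself. On `E` the multiplier
`μ = 0` returns `f`; off `E` some `f_t x > 0`, and a large multiplier on `t` alone makes
`f x + c f_t x` arbitrarily large.

Only the inequality `g ≤ g^**` of Fenchel–Moreau is needed. It comes from separating `(x, r)`,
`r < g x`, from the closed convex epigraph: a non-vertical hyperplane is an affine minorant of
`g` above `r` at `x`, while a vertical one tilts an affine minorant obtained by separating a
point just below the graph over the domain.
-/

open scoped BigOperators Pointwise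
open Classical

/-- Fenchel–Legendre conjugate of an extended-real-valued function,
evaluated on the weak* dual. -/
noncomputable def conjFn {X : Type*} [AddCommGroup X] [Module ℝ X] [TopologicalSpace X]
    (g : X → EReal) (p : WeakDual ℝ X) : EReal :=
  ⨆ x : X, ((p x : ℝ) : EReal) - g x

/-- The Lagrangian `f + ∑_{t ∈ H} μ t • f_t` (with values in the extended reals,
using the convention `0 * (+∞) = 0`). -/
noncomputable def lagFn {X T : Type*} (f : X → EReal) (ft : T → X → EReal)
    (H : Finset T) (μ : T → ℝ) : X → EReal :=
  fun x => f x + ∑ t ∈ H, ((μ t : EReal) * ft t x)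

/-- `f + δ_E`, where `E = ⋂_{t ∈ T} {f_t ≤ 0}`. -/
noncomputable def fPlusIndicator {X T : Type*} (f : X → EReal) (ft : T → X → EReal) :
    X → EReal :=
  fun x => if ∀ t : T, ft t x ≤ 0 then f x else ⊤

/-- The epigraph (inside `X* × ℝ`) of the conjugate of `g`. -/
def epiConj {X : Type*} [AddCommGroup X] [Module ℝ X] [TopologicalSpace X]
    (g : X → EReal) : Set (WeakDual ℝ X × ℝ) :=
  {q | conjFn g q.1 ≤ (q.2 : EReal)}

/-- The set `𝓐_𝓗 = ⋃_{H ∈ 𝓗} ⋃_{μ ∈ ℝ₊^H} epi (f + ∑_{t∈H} μ_t f_t)^*`. -/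
def ASet {X T : Type*} [AddCommGroup X] [Module ℝ X] [TopologicalSpace X]
    (f : X → EReal) (ft : T → X → EReal) (𝓗 : Set (Finset T)) :
    Set (WeakDual ℝ X × ℝ) :=
  {q | ∃ H ∈ 𝓗, ∃ μ : T → ℝ, (∀ t ∈ H, 0 ≤ μ t) ∧ q ∈ epiConj (lagFn f ft H μ)}

/-- The convex cone generated by a set: `cone A = ℝ≥0 • (co A)`. -/
def coneGen {M : Type*} [AddCommMonoid M] [Module ℝ M] (A : Set M) : Set M :=
  {p | ∃ c : ℝ, 0 ≤ c ∧ ∃ q ∈ convexHull ℝ A, p = c • q}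

/-- `φ_𝓗(x*) = inf_{H ∈ 𝓗, μ ∈ ℝ₊^H} (f + ∑_{t∈H} μ_t f_t)^*(x*)`. -/
noncomputable def phiH {X T : Type*} [AddCommGroup X] [Module ℝ X] [TopologicalSpace X]
    (f : X → EReal) (ft : T → X → EReal) (𝓗 : Set (Finset T)) (p : WeakDual ℝ X) : EReal :=
  ⨅ H ∈ 𝓗, ⨅ μ : {μ : T → ℝ // ∀ t ∈ H, 0 ≤ μ t}, conjFn (lagFn f ft H μ.1) p

/-- Conjugate of a function on the weak* dual, evaluated back on `X`. -/
noncomputable def conjBack {X : Type*} [AddCommGroup X] [Module ℝ X] [TopologicalSpace X]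
    (g : WeakDual ℝ X → EReal) (x : X) : EReal :=
  ⨆ p : WeakDual ℝ X, ((p x : ℝ) : EReal) - g p

open Set

namespace EReal

lemma coe_mul_ne_bot {c : ℝ} (hc : 0 ≤ c) {v : EReal} (hv : v ≠ ⊥) : (c : EReal) * v ≠ ⊥ :=
  (mul_ne_bot _ _).2
    ⟨.inl (coe_ne_bot c), .inr hv, .inl (coe_ne_top c), .inl (EReal.coe_nonneg.2 hc)⟩

lemma sub_le_of_sub_le {a b c : EReal} (hc : c ≠ ⊥) (h : a - c ≤ b) : a - b ≤ c := by
  induction c with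
  | bot => exact absurd rfl hc
  | coe c =>
    exact sub_le_of_le_add' ((sub_le_iff_le_add (.inl (coe_ne_bot c)) (.inl (coe_ne_top c))).1 h)
  | top => exact le_top

lemma exists_lt_add_mul {a v : EReal} (ha : a ≠ ⊥) (hv : 0 < v) (M : ℝ) :
    ∃ c : ℝ, 0 ≤ c ∧ (M : EReal) < a + c * v := by
  obtain ⟨w, hw, hwv⟩ := lt_iff_exists_real_btwn.1 hv
  have hw : 0 < w := EReal.coe_pos.1 hw
  induction a with
  | bot => exact absurd rfl ha
  | top => exact ⟨0, le_rfl, by simp⟩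
  | coe a =>
    set c := max 0 ((M + 1 - a) / w)
    have hc : M + 1 - a ≤ c * w := (div_le_iff₀ hw).1 (le_max_right _ _)
    refine ⟨c, le_max_left _ _, ?_⟩
    calc (M : EReal) < ((a + c * w : ℝ) : EReal) := EReal.coe_lt_coe_iff.2 (by linarith)
      _ ≤ a + c * v := by
        rw [coe_add, coe_mul]
        exact add_le_add le_rfl
          (mul_le_mul_of_nonneg_left hwv.le (EReal.coe_nonneg.2 (le_max_left _ _)))

lemma exists_coe_of_add_le_coe {x y : EReal} {s : ℝ} (hx : x ≠ ⊥) (hy : y ≠ ⊥) (h : x + y ≤ s) :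
    ∃ a b : ℝ, x = a ∧ y = b ∧ a + b ≤ s := by
  induction x <;> induction y <;> simp_all [← coe_add]

end EReal

lemma LowerSemicontinuous.ereal_const_mul {X : Type*} [TopologicalSpace X] {g : X → EReal}
    (hg : LowerSemicontinuous g) {c : ℝ} (hc : 0 ≤ c) :
    LowerSemicontinuous fun x => (c : EReal) * g x := by
  rcases hc.eq_or_lt with rfl | hc
  · simpa using lowerSemicontinuous_const
  refine Continuous.comp_lowerSemicontinuous (g := fun v : EReal => (c : EReal) * v) ?_ hg
    fun _ _ h => mul_le_mul_of_nonneg_left h (EReal.coe_nonneg.2 hc.le)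
  have hc0 : (c : EReal) ≠ 0 := EReal.coe_ne_zero.2 hc.ne'
  exact continuous_iff_continuousAt.2 fun v =>
    (EReal.continuousAt_mul (.inl hc0) (.inl hc0) (.inl (EReal.coe_ne_bot c))
      (.inl (EReal.coe_ne_top c))).comp (continuous_const.prodMk continuous_id).continuousAt

lemma LowerSemicontinuous.ereal_add {X : Type*} [TopologicalSpace X] {g h : X → EReal}
    (hg : LowerSemicontinuous g) (hh : LowerSemicontinuous h) (hgb : ∀ x, g x ≠ ⊥)
    (hhb : ∀ x, h x ≠ ⊥) : LowerSemicontinuous fun x => g x + h x :=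
  hg.add' hh fun x => EReal.continuousAt_add (.inr (hhb x)) (.inl (hgb x))

def realEpigraph {X : Type*} (g : X → EReal) : Set (X × ℝ) := {p | g p.1 ≤ (p.2 : EReal)}

lemma LowerSemicontinuous.isClosed_realEpigraph {X : Type*} [TopologicalSpace X] {g : X → EReal}
    (hg : LowerSemicontinuous g) : IsClosed (realEpigraph g) :=
  hg.isClosed_epigraph.preimage
    (continuous_fst.prodMk (continuous_coe_real_ereal.comp continuous_snd))

section Convexity

variable {X : Type*} [AddCommGroup X] [Module ℝ X]

lemma convex_realEpigraph_add {g h : X → EReal} (hgb : ∀ x, g x ≠ ⊥) (hhb : ∀ x, h x ≠ ⊥)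
    (hg : Convex ℝ (realEpigraph g)) (hh : Convex ℝ (realEpigraph h)) :
    Convex ℝ (realEpigraph fun x => g x + h x) := by
  rintro ⟨y₁, s₁⟩ hp₁ ⟨y₂, s₂⟩ hp₂ a b ha hb hab
  obtain ⟨G₁, H₁, hG₁, hH₁, hs₁⟩ := EReal.exists_coe_of_add_le_coe (hgb y₁) (hhb y₁) hp₁
  obtain ⟨G₂, H₂, hG₂, hH₂, hs₂⟩ := EReal.exists_coe_of_add_le_coe (hgb y₂) (hhb y₂) hp₂
  have hG := hg (x := (y₁, G₁)) (y := (y₂, G₂)) hG₁.le hG₂.le ha hb hab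
  have hH := hh (x := (y₁, H₁)) (y := (y₂, H₂)) hH₁.le hH₂.le ha hb hab
  simp only [realEpigraph, mem_ofPred_eq, Prod.smul_mk, Prod.mk_add_mk, smul_eq_mul] at hG hH ⊢
  calc g (a • y₁ + b • y₂) + h (a • y₁ + b • y₂)
      ≤ ((a * G₁ + b * G₂ + (a * H₁ + b * H₂) : ℝ) : EReal) := by
        rw [EReal.coe_add]; exact add_le_add hG hH
    _ ≤ ((a * s₁ + b * s₂ : ℝ) : EReal) := by
        rw [EReal.coe_le_coe_iff]
        nlinarith [mul_le_mul_of_nonneg_left hs₁ ha, mul_le_mul_of_nonneg_left hs₂ hb]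

lemma convex_realEpigraph_const_mul {g : X → EReal} {c : ℝ} (hc : 0 ≤ c)
    (hg : Convex ℝ (realEpigraph g)) : Convex ℝ (realEpigraph fun x => (c : EReal) * g x) := by
  rcases hc.eq_or_lt with rfl | hc
  · have h0 : realEpigraph (fun x => ((0 : ℝ) : EReal) * g x) =
        LinearMap.snd ℝ X ℝ ⁻¹' Ici 0 := by
      ext p
      simp [realEpigraph]
    rw [h0]
    exact (convex_Ici 0).linear_preimage _
  have hc' : (0 : EReal) < c := EReal.coe_pos.2 hc
  have hpre : realEpigraph (fun x => (c : EReal) * g x) =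
      ((LinearMap.id : X →ₗ[ℝ] X).prodMap (c⁻¹ • LinearMap.id)) ⁻¹' realEpigraph g := by
    ext p
    simp only [realEpigraph, mem_ofPred_eq, mem_preimage, LinearMap.prodMap_apply,
      LinearMap.id_apply, LinearMap.smul_apply, smul_eq_mul]
    rw [EReal.coe_mul, EReal.coe_inv, mul_comm (c : EReal)⁻¹, ← div_eq_mul_inv,
      EReal.le_div_iff_mul_le hc' (EReal.coe_ne_top c), mul_comm]
  rw [hpre]
  exact hg.linear_preimage _

end Convexity

section FenchelMoreau

variable {X : Type*} [AddCommGroup X] [Module ℝ X] [TopologicalSpace X]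

lemma conjFn_le_of_affine_minorant {g : X → EReal} {p : WeakDual ℝ X} {A : ℝ}
    (h : ∀ y (s : ℝ), g y ≤ s → A + p y ≤ s) : conjFn g p ≤ (-A : ℝ) := by
  refine iSup_le fun y => ?_
  cases hy : g y using EReal.rec with
  | bot => linarith [h y (A + p y - 1) (by simp [hy])]
  | coe G =>
    rw [← EReal.coe_sub, EReal.coe_le_coe_iff]
    linarith [h y G hy.le]
  | top => simp

lemma exists_affine_minorant_of_separation {g : X → EReal} {q : StrongDual ℝ X} {β u : ℝ}
    {x : X} {r : ℝ} (hβ : β < 0) (hsep : ∀ y (s : ℝ), g y ≤ s → q y + β * s < u)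
    (hx : u < q x + β * r) :
    ∃ (q' : StrongDual ℝ X) (A : ℝ), (∀ y (s : ℝ), g y ≤ s → A + q' y ≤ s) ∧ r ≤ A + q' x := by
  have hβ' : 0 < -β := neg_pos.2 hβ
  have hform : ∀ y, -(u / -β) + ((-β)⁻¹ • q) y = (q y - u) / -β := fun y => by
    simp only [smul_apply, smul_eq_mul]
    field_simp
    ring
  refine ⟨(-β)⁻¹ • q, -(u / -β), fun y s hs => ?_, ?_⟩
  · rw [hform, div_le_iff₀ hβ']
    linarith [hsep y s hs]
  · rw [hform, le_div_iff₀ hβ']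
    linarith

lemma exists_affine_minorant_of_vertical_separation {g : X → EReal} {q₀ q : StrongDual ℝ X}
    {A₀ u : ℝ} {x : X} (r : ℝ) (h₀ : ∀ y (s : ℝ), g y ≤ s → A₀ + q₀ y ≤ s)
    (hsep : ∀ y (s : ℝ), g y ≤ s → q y < u) (hx : u < q x) :
    ∃ (q' : StrongDual ℝ X) (A : ℝ), (∀ y (s : ℝ), g y ≤ s → A + q' y ≤ s) ∧ r ≤ A + q' x := by
  set c := max 0 ((r - (A₀ + q₀ x)) / (q x - u))
  have hc : 0 ≤ c := le_max_left _ _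
  have hcx : r - (A₀ + q₀ x) ≤ c * (q x - u) := (div_le_iff₀ (sub_pos.2 hx)).1 (le_max_right _ _)
  refine ⟨q₀ + c • q, A₀ - c * u, fun y s hs => ?_, ?_⟩ <;>
    simp only [add_apply, smul_apply, smul_eq_mul]
  · nlinarith [h₀ y s hs, mul_nonneg hc (sub_nonneg.2 (hsep y s hs).le)]
  · linarith

variable [IsTopologicalAddGroup X] [ContinuousSMul ℝ X] [LocallyConvexSpace ℝ X]

lemma exists_separation_realEpigraph {g : X → EReal} (hconv : Convex ℝ (realEpigraph g))
    (hlsc : LowerSemicontinuous g) {x : X} {r : ℝ} (hr : (r : EReal) < g x) :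
    ∃ (q : StrongDual ℝ X) (β u : ℝ),
      (∀ y (s : ℝ), g y ≤ s → q y + β * s < u) ∧ u < q x + β * r := by
  obtain ⟨l, u, hl, hu⟩ := geometric_hahn_banach_closed_point hconv hlsc.isClosed_realEpigraph
    (x := (x, r)) hr.not_ge
  have hl_apply : ∀ y s, l (y, s) = l.comp (.inl ℝ X ℝ) y + l (0, 1) * s := by
    intro y s
    have hys : ((y, s) : X × ℝ) = (y, 0) + s • (0, 1) := by simp
    rw [hys, map_add, map_smul, smul_eq_mul, mul_comm]
    rfl
  exact ⟨l.comp (.inl ℝ X ℝ), l (0, 1), u, fun y s hs => hl_apply y s ▸ hl (y, s) hs,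
    hl_apply x r ▸ hu⟩

lemma exists_affine_minorant {g : X → EReal} (hconv : Convex ℝ (realEpigraph g))
    (hlsc : LowerSemicontinuous g) {x₀ : X} {t₀ : ℝ} (hx₀ : g x₀ = t₀) :
    ∃ (q : StrongDual ℝ X) (A : ℝ), ∀ y (s : ℝ), g y ≤ s → A + q y ≤ s := by
  obtain ⟨q, β, u, hsep, hx⟩ := exists_separation_realEpigraph hconv hlsc (x := x₀) (r := t₀ - 1)
    (by rw [hx₀, EReal.coe_lt_coe_iff]; linarith)
  have hβ : β < 0 := by nlinarith [hsep x₀ t₀ hx₀.le]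
  obtain ⟨q', A, h, -⟩ := exists_affine_minorant_of_separation hβ hsep hx
  exact ⟨q', A, h⟩

lemma exists_affine_minorant_gt {g : X → EReal} (hb : ∀ y, g y ≠ ⊥)
    (hconv : Convex ℝ (realEpigraph g)) (hlsc : LowerSemicontinuous g) {x : X} {r : ℝ}
    (hr : (r : EReal) < g x) :
    ∃ (q : StrongDual ℝ X) (A : ℝ), (∀ y (s : ℝ), g y ≤ s → A + q y ≤ s) ∧ r ≤ A + q x := by
  by_cases htop : ∀ y, g y = ⊤
  · exact ⟨0, r, fun y s hs => by simp [htop y] at hs, by simp⟩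
  obtain ⟨x₀, hx₀⟩ := not_forall.1 htop
  obtain ⟨t₀, ht₀⟩ : ∃ t₀ : ℝ, g x₀ = t₀ := ⟨(g x₀).toReal, (EReal.coe_toReal hx₀ (hb x₀)).symm⟩
  obtain ⟨q, β, u, hsep, hx⟩ := exists_separation_realEpigraph hconv hlsc hr
  have hβ : β ≤ 0 := by
    by_contra! hβ
    have hs := hsep x₀ (max t₀ ((u - q x₀) / β))
      (ht₀.trans_le (EReal.coe_le_coe_iff.2 (le_max_left _ _)))
    have := (div_le_iff₀ hβ).1 (le_max_right t₀ ((u - q x₀) / β))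
    linarith
  rcases hβ.lt_or_eq with hβ | rfl
  · exact exists_affine_minorant_of_separation hβ hsep hx
  · obtain ⟨q₀, A₀, h₀⟩ := exists_affine_minorant hconv hlsc ht₀
    exact exists_affine_minorant_of_vertical_separation r h₀
      (fun y s hs => by simpa using hsep y s hs) (by simpa using hx)

theorem le_conjBack_conjFn {g : X → EReal} (hb : ∀ y, g y ≠ ⊥)
    (hconv : Convex ℝ (realEpigraph g)) (hlsc : LowerSemicontinuous g) (x : X) :
    g x ≤ conjBack (conjFn g) x := by
  refine EReal.ge_of_forall_gt_iff_ge.1 fun r hr => ?_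
  obtain ⟨q, A, hq, hrx⟩ := exists_affine_minorant_gt hb hconv hlsc hr
  let p := StrongDual.toWeakDual q
  calc (r : EReal) ≤ ((p x - -A : ℝ) : EReal) := EReal.coe_le_coe_iff.2 (by simp [p]; linarith)
    _ = p x - ((-A : ℝ) : EReal) := EReal.coe_sub _ _
    _ ≤ p x - conjFn g p := EReal.sub_le_sub le_rfl (conjFn_le_of_affine_minorant hq)
    _ ≤ conjBack (conjFn g) x :=
      le_iSup (fun p : WeakDual ℝ X => ((p x : ℝ) : EReal) - conjFn g p) p

end FenchelMoreau

section Lagrangian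

variable {X T : Type*} {f : X → EReal} {ft : T → X → EReal} {H : Finset T} {μ : T → ℝ}

lemma lagFn_zero (H : Finset T) : lagFn f ft H 0 = f := by
  ext
  simp [lagFn]

lemma lagFn_single {t : T} (ht : t ∈ H) (c : ℝ) :
    lagFn f ft H (Pi.single t c) = fun x => f x + c * ft t x := by
  ext x
  rw [lagFn, Finset.sum_eq_single_of_mem t ht fun s _ hst => by simp [hst], Pi.single_eq_same]

lemma lagFn_le_of_forall_nonpos (hμ : ∀ t ∈ H, 0 ≤ μ t) {x : X} (hx : ∀ t, ft t x ≤ 0) :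
    lagFn f ft H μ x ≤ f x :=
  add_le_of_nonpos_right <| Finset.sum_nonpos fun t ht =>
    mul_nonpos_of_nonneg_of_nonpos (EReal.coe_nonneg.2 (hμ t ht)) (hx t)

end Lagrangian

section Conjugates

variable {X T : Type*} [AddCommGroup X] [Module ℝ X] [TopologicalSpace X]
  {f : X → EReal} {ft : T → X → EReal} {𝓗 : Set (Finset T)} {H : Finset T} {μ : T → ℝ}

lemma conjBack_antitone {g h : WeakDual ℝ X → EReal} (hgh : g ≤ h) : conjBack h ≤ conjBack g :=
  fun _ => iSup_mono fun p => EReal.sub_le_sub le_rfl (hgh p)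

lemma phiH_le_conjFn_lagFn (hH : H ∈ 𝓗) (hμ : ∀ t ∈ H, 0 ≤ μ t) :
    phiH f ft 𝓗 ≤ conjFn (lagFn f ft H μ) :=
  fun _ => (iInf₂_le H hH).trans (iInf_le_of_le ⟨μ, hμ⟩ le_rfl)

lemma conjBack_phiH_le_fPlusIndicator (hf : ∀ x, f x ≠ ⊥) :
    conjBack (phiH f ft 𝓗) ≤ fPlusIndicator f ft := by
  intro x
  unfold fPlusIndicator
  split_ifs with hx
  · refine iSup_le fun p => EReal.sub_le_of_sub_le (hf x) ?_
    refine le_iInf₂ fun H _ => le_iInf fun μ => ?_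
    exact (EReal.sub_le_sub le_rfl (lagFn_le_of_forall_nonpos μ.2 hx)).trans
      (le_iSup (fun y => ((p y : ℝ) : EReal) - lagFn f ft H μ.1 y) x)
  · exact le_top

lemma le_conjBack_phiH [IsTopologicalAddGroup X] [ContinuousSMul ℝ X] [LocallyConvexSpace ℝ X]
    {g : X → EReal} (hH : H ∈ 𝓗) (hμ : ∀ t ∈ H, 0 ≤ μ t) (hg : lagFn f ft H μ = g)
    (hb : ∀ x, g x ≠ ⊥) (hconv : Convex ℝ (realEpigraph g)) (hlsc : LowerSemicontinuous g) :
    g ≤ conjBack (phiH f ft 𝓗) := by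
  subst hg
  exact fun x => (le_conjBack_conjFn hb hconv hlsc x).trans
    (conjBack_antitone (phiH_le_conjFn_lagFn hH hμ) x)

end Conjugates

theorem conj_phiH_eq_general {X T : Type*} [AddCommGroup X] [Module ℝ X] [TopologicalSpace X]
    [IsTopologicalAddGroup X] [ContinuousSMul ℝ X] [LocallyConvexSpace ℝ X]
    (f : X → EReal) (ft : T → X → EReal)
    (hf : ∀ x, f x ≠ ⊥)
    (hft : ∀ t x, ft t x ≠ ⊥)
    (hfconv : Convex ℝ {p : X × ℝ | f p.1 ≤ (p.2 : EReal)})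
    (hftconv : ∀ t, Convex ℝ {p : X × ℝ | ft t p.1 ≤ (p.2 : EReal)})
    (hflsc : LowerSemicontinuous f) (hftlsc : ∀ t, LowerSemicontinuous (ft t))
    (𝓗 : Set (Finset T)) (h𝓗ne : 𝓗.Nonempty)
    (hcov : ∀ t : T, ∃ H ∈ 𝓗, t ∈ H) :
    conjBack (phiH f ft 𝓗) = fPlusIndicator f ft := by
  refine le_antisymm (conjBack_phiH_le_fPlusIndicator hf) fun x => ?_
  unfold fPlusIndicator
  split_ifs with hx
  · obtain ⟨H, hH⟩ := h𝓗ne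
    exact le_conjBack_phiH hH (fun _ _ => le_rfl) (lagFn_zero H) hf hfconv hflsc x
  obtain ⟨t, ht⟩ := not_forall.1 hx
  obtain ⟨H, hH, htH⟩ := hcov t
  refine top_le_iff.2 ((EReal.eq_top_iff_forall_lt _).2 fun M => ?_)
  obtain ⟨c, hc, hM⟩ := EReal.exists_lt_add_mul (hf x) (not_le.1 ht) M
  have hμ : ∀ s ∈ H, 0 ≤ (Pi.single t c : T → ℝ) s := fun s _ => by
    by_cases h : s = t <;> simp [h, hc]
  have hmul : ∀ y, (c : EReal) * ft t y ≠ ⊥ := fun y => EReal.coe_mul_ne_bot hc (hft t y)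
  have hb : ∀ y, f y + c * ft t y ≠ ⊥ := fun y => EReal.add_ne_bot_iff.2 ⟨hf y, hmul y⟩
  have hconv :=
    convex_realEpigraph_add hf hmul hfconv (convex_realEpigraph_const_mul hc (hftconv t))
  have hlsc := hflsc.ereal_add ((hftlsc t).ereal_const_mul hc) hf hmul
  exact hM.trans_le (le_conjBack_phiH hH hμ (lagFn_single htH c) hb hconv hlsc x)

theorem conj_phiH_eq {X T : Type*} [AddCommGroup X] [Module ℝ X] [TopologicalSpace X]
    [IsTopologicalAddGroup X] [ContinuousSMul ℝ X] [LocallyConvexSpace ℝ X] [T2Space X]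
    (f : X → EReal) (ft : T → X → EReal)
    (hf : ∀ x, f x ≠ ⊥) (hfprop : ∃ x, f x ≠ ⊤)
    (hft : ∀ t x, ft t x ≠ ⊥) (hftprop : ∀ t, ∃ x, ft t x ≠ ⊤)
    (hfconv : Convex ℝ {p : X × ℝ | f p.1 ≤ (p.2 : EReal)})
    (hftconv : ∀ t, Convex ℝ {p : X × ℝ | ft t p.1 ≤ (p.2 : EReal)})
    (hflsc : LowerSemicontinuous f) (hftlsc : ∀ t, LowerSemicontinuous (ft t))
    (𝓗 : Set (Finset T)) (h𝓗ne : 𝓗.Nonempty) (h𝓗mem : ∀ H ∈ 𝓗, H.Nonempty)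
    (hcov : ∀ t : T, ∃ H ∈ 𝓗, t ∈ H) :
    conjBack (phiH f ft 𝓗) = fPlusIndicator f ft :=
  conj_phiH_eq_general f ft hf hft hfconv hftconv hflsc hftlsc 𝓗 h𝓗ne hcov
end

section
/- 𝓗-stable strong duality implies closedness: if for every x* ∈ X* the value (f + δ_E)^*(x*) equals min_{H∈𝓗, μ∈ℝ₊^H} (f + ∑_{t∈H} μ_t f_t)^*(x*) (minimum attained), then 𝓐_𝓗 is w*-closed convex regarding {x*}×ℝ for every x*, i.e., (closure of co 𝓐_𝓗) ∩ ({x*}×ℝ) = 𝓐_𝓗 ∩ ({x*}×ℝ). -/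
open scoped BigOperators Pointwise
open Classical

/-! The stability hypothesis says that every point of `epi (f + δ_E)^*` already lies in `𝓐_𝓗`.
Since `𝓐_𝓗 ⊆ epi (f + δ_E)^*` always holds and the latter is a w*-closed convex set, the closed
convex hull of `𝓐_𝓗` is squeezed between `𝓐_𝓗` and `epi (f + δ_E)^*`, so it equals `𝓐_𝓗`; in
particular every section `{x*} × ℝ` of the two sets agrees. -/

lemma EReal.coe_sub_le_coe_iff (a b : ℝ) (c : EReal) :
    (a : EReal) - c ≤ b ↔ ((a - b : ℝ) : EReal) ≤ c := by
  induction c using EReal.rec with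
  | bot => simp [EReal.sub_bot (EReal.coe_ne_bot _), - EReal.coe_sub]
  | coe c =>
    rw [← EReal.coe_sub, EReal.coe_le_coe_iff, EReal.coe_le_coe_iff]
    constructor <;> intro h <;> linarith
  | top => simp

section Conjugate

variable {X T : Type*}

lemma lagFn_le_fPlusIndicator (f : X → EReal) (ft : T → X → EReal) (H : Finset T)
    {μ : T → ℝ} (hμ : ∀ t ∈ H, 0 ≤ μ t) : lagFn f ft H μ ≤ fPlusIndicator f ft := by
  intro x
  unfold lagFn fPlusIndicator
  split_ifs with hx
  · have hsum : ∑ t ∈ H, (μ t : EReal) * ft t x ≤ 0 :=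
      Finset.sum_nonpos fun t ht =>
        mul_nonpos_of_nonneg_of_nonpos (EReal.coe_nonneg.2 (hμ t ht)) (hx t)
    simpa using add_le_add_right hsum (f x)
  · exact le_top

variable [AddCommGroup X] [Module ℝ X] [TopologicalSpace X]

lemma conjFn_anti {g h : X → EReal} (hgh : g ≤ h) (p : WeakDual ℝ X) :
    conjFn h p ≤ conjFn g p :=
  iSup_mono fun x => EReal.sub_le_sub le_rfl (hgh x)

lemma epiConj_eq_iInter_preimage (g : X → EReal) :
    epiConj g = ⋂ x : X,
      (fun q : WeakDual ℝ X × ℝ => q.1 x - q.2) ⁻¹' {r : ℝ | (r : EReal) ≤ g x} := by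
  ext q
  simp only [epiConj, conjFn, iSup_le_iff, EReal.coe_sub_le_coe_iff, Set.mem_ofPred_eq,
    Set.mem_iInter, Set.mem_preimage]

lemma isClosed_epiConj (g : X → EReal) : IsClosed (epiConj g) := by
  rw [epiConj_eq_iInter_preimage]
  refine isClosed_iInter fun x =>
    IsClosed.preimage ?_ (isClosed_Iic.preimage continuous_coe_real_ereal)
  exact ((WeakDual.eval_continuous x).comp continuous_fst).sub continuous_snd

lemma convex_epiConj (g : X → EReal) : Convex ℝ (epiConj g) := by
  rw [epiConj_eq_iInter_preimage]
  refine convex_iInter fun x => Convex.is_linear_preimage ?_ ⟨?_, ?_⟩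
  · exact convex_iff_ordConnected.2 <|
      Set.ordConnected_Iic.preimage_mono (fun _ _ h => EReal.coe_le_coe_iff.2 h)
  · intro a b
    change a.1 x + b.1 x - (a.2 + b.2) = (a.1 x - a.2) + (b.1 x - b.2)
    ring
  · intro r a
    change r * a.1 x - r * a.2 = r * (a.1 x - a.2)
    ring

lemma ASet_subset_epiConj_fPlusIndicator (f : X → EReal) (ft : T → X → EReal)
    (𝓗 : Set (Finset T)) : ASet f ft 𝓗 ⊆ epiConj (fPlusIndicator f ft) := by
  rintro q ⟨H, -, μ, hμ, hq⟩
  exact (conjFn_anti (lagFn_le_fPlusIndicator f ft H hμ) q.1).trans hq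

lemma epiConj_fPlusIndicator_subset_ASet {f : X → EReal} {ft : T → X → EReal}
    {𝓗 : Set (Finset T)}
    (hstable : ∀ p : WeakDual ℝ X, ∃ H ∈ 𝓗, ∃ μ : T → ℝ, (∀ t ∈ H, 0 ≤ μ t) ∧
      conjFn (lagFn f ft H μ) p = conjFn (fPlusIndicator f ft) p) :
    epiConj (fPlusIndicator f ft) ⊆ ASet f ft 𝓗 := by
  intro q hq
  obtain ⟨H, hH, μ, hμ, hconj⟩ := hstable q.1
  exact ⟨H, hH, μ, hμ, hconj.trans_le hq⟩

lemma closure_convexHull_ASet_eq {f : X → EReal} {ft : T → X → EReal} {𝓗 : Set (Finset T)}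
    (hstable : ∀ p : WeakDual ℝ X, ∃ H ∈ 𝓗, ∃ μ : T → ℝ, (∀ t ∈ H, 0 ≤ μ t) ∧
      conjFn (lagFn f ft H μ) p = conjFn (fPlusIndicator f ft) p) :
    closure (convexHull ℝ (ASet f ft 𝓗)) = ASet f ft 𝓗 := by
  refine subset_antisymm ?_ (subset_convexHull ℝ _ |>.trans subset_closure)
  calc closure (convexHull ℝ (ASet f ft 𝓗))
      ⊆ epiConj (fPlusIndicator f ft) :=
        closure_minimal (convexHull_min (ASet_subset_epiConj_fPlusIndicator f ft 𝓗)
          (convex_epiConj _)) (isClosed_epiConj _)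
    _ ⊆ ASet f ft 𝓗 := epiConj_fPlusIndicator_subset_ASet hstable

end Conjugate

theorem stable_strong_duality_implies_sectionwise_closed_convex_general {X T : Type*}
    [AddCommGroup X] [Module ℝ X] [TopologicalSpace X]
    (f : X → EReal) (ft : T → X → EReal)
    (𝓗 : Set (Finset T))
    (hstable : ∀ p : WeakDual ℝ X, ∃ H ∈ 𝓗, ∃ μ : T → ℝ, (∀ t ∈ H, 0 ≤ μ t) ∧
      conjFn (lagFn f ft H μ) p = conjFn (fPlusIndicator f ft) p) :
    ∀ xs : WeakDual ℝ X,
      closure (convexHull ℝ (ASet f ft 𝓗)) ∩ ({xs} ×ˢ (Set.univ : Set ℝ)) =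
        ASet f ft 𝓗 ∩ ({xs} ×ˢ (Set.univ : Set ℝ)) := by
  intro xs
  rw [closure_convexHull_ASet_eq hstable]

theorem stable_strong_duality_implies_sectionwise_closed_convex {X T : Type*}
    [AddCommGroup X] [Module ℝ X] [TopologicalSpace X]
    (f : X → EReal) (ft : T → X → EReal)
    (hf : ∀ x, f x ≠ ⊥) (hfprop : ∃ x, f x ≠ ⊤)
    (hft : ∀ t x, ft t x ≠ ⊥) (hftprop : ∀ t, ∃ x, ft t x ≠ ⊤)
    (𝓗 : Set (Finset T)) (h𝓗ne : 𝓗.Nonempty) (h𝓗mem : ∀ H ∈ 𝓗, H.Nonempty)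
    (hstable : ∀ p : WeakDual ℝ X, ∃ H ∈ 𝓗, ∃ μ : T → ℝ, (∀ t ∈ H, 0 ≤ μ t) ∧
      conjFn (lagFn f ft H μ) p = conjFn (fPlusIndicator f ft) p) :
    ∀ xs : WeakDual ℝ X,
      closure (convexHull ℝ (ASet f ft 𝓗)) ∩ ({xs} ×ˢ (Set.univ : Set ℝ)) =
        ASet f ft 𝓗 ∩ ({xs} ×ˢ (Set.univ : Set ℝ)) :=
  stable_strong_duality_implies_sectionwise_closed_convex_general f ft 𝓗 hstable
end
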